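/- arXiv:1710.10859 — 2 statements merged into one kernel-verified Lean document; each statement's English description precedes it below -/
import Mathlib

section
/- Let L = S ∔ R be a Levi decomposition of a Leibniz algebra and θ : S → I an S-module homomorphism. Define δ_θ on L by δ_θ(x_S + x_R) = θ(x_S) for x_S ∈ S, x_R ∈ R. If [J, R] = 0, where J is the maximal S-submodule of I with Hom_S(S, I) ≡ Hom_S(S, J) (in particular [θ(S), R] = 0), then δ_θ is a derivation of L with δ_θ² = 0, and exp(δ_θ) = id + δ_θ is an automorphism of L mapping S onto S_θ = {x + θ(x) : x ∈ S}. -/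
open Finset

variable {F L : Type} [Field F] [AddCommGroup L] [Module F L]

/-- The span of all brackets `[a,b]` with `a ∈ A`, `b ∈ B`. -/
def brSpan (br : L →ₗ[F] L →ₗ[F] L) (A B : Submodule F L) : Submodule F L :=
  Submodule.span F {z | ∃ a ∈ A, ∃ b ∈ B, z = br a b}

/-- The subspace `I` spanned by all squares `[x,x]`. -/
def sqIdeal (br : L →ₗ[F] L →ₗ[F] L) : Submodule F L :=
  Submodule.span F {z | ∃ x : L, z = br x x}

/-- `K` is a two-sided ideal of the Leibniz algebra. -/
def IsIdeal (br : L →ₗ[F] L →ₗ[F] L) (K : Submodule F L) : Prop :=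
  ∀ x ∈ K, ∀ y : L, br x y ∈ K ∧ br y x ∈ K

/-- Lower central series of a subspace `K`. -/
def lcs (br : L →ₗ[F] L →ₗ[F] L) (K : Submodule F L) : ℕ → Submodule F L
  | 0 => K
  | n + 1 => brSpan br (lcs br K n) K

/-- Derived series of a subspace `K`. -/
def derSer (br : L →ₗ[F] L →ₗ[F] L) (K : Submodule F L) : ℕ → Submodule F L
  | 0 => K
  | n + 1 => brSpan br (derSer br K n) (derSer br K n)

def IsNilpotentSub (br : L →ₗ[F] L →ₗ[F] L) (K : Submodule F L) : Prop :=
  ∃ n, lcs br K n = ⊥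

def IsSolvableSub (br : L →ₗ[F] L →ₗ[F] L) (K : Submodule F L) : Prop :=
  ∃ n, derSer br K n = ⊥

/-- `N` is the nilradical: the maximal nilpotent ideal. -/
def IsNilradical (br : L →ₗ[F] L →ₗ[F] L) (N : Submodule F L) : Prop :=
  IsIdeal br N ∧ IsNilpotentSub br N ∧
    ∀ K : Submodule F L, IsIdeal br K → IsNilpotentSub br K → K ≤ N

/-- `R` is the solvable radical: the maximal solvable ideal. -/
def IsSolvRadical (br : L →ₗ[F] L →ₗ[F] L) (R : Submodule F L) : Prop :=
  IsIdeal br R ∧ IsSolvableSub br R ∧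
    ∀ K : Submodule F L, IsIdeal br K → IsSolvableSub br K → K ≤ R

/-- `S` is a Lie subalgebra (closed under the bracket, which is antisymmetric on it). -/
def IsLieSubalg (br : L →ₗ[F] L →ₗ[F] L) (S : Submodule F L) : Prop :=
  (∀ x ∈ S, ∀ y ∈ S, br x y ∈ S) ∧ ∀ x ∈ S, ∀ y ∈ S, br x y = - br y x

/-- `K` is an ideal of the subalgebra `S`. -/
def IsIdealIn (br : L →ₗ[F] L →ₗ[F] L) (S K : Submodule F L) : Prop :=
  K ≤ S ∧ ∀ x ∈ K, ∀ y ∈ S, br x y ∈ K ∧ br y x ∈ K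

/-- `S` is a semisimple Lie subalgebra: a Lie subalgebra with no nonzero solvable ideals. -/
def IsSemisimpleSubalg (br : L →ₗ[F] L →ₗ[F] L) (S : Submodule F L) : Prop :=
  IsLieSubalg br S ∧
    ∀ K : Submodule F L, IsIdealIn br S K → IsSolvableSub br K → K = ⊥

/-- `L = S ∔ R` is a Levi decomposition: `S` a semisimple Lie subalgebra, `R` the solvable
radical, and `L` the direct (vector-space) sum of `S` and `R`. -/
def IsLeviDecomp (br : L →ₗ[F] L →ₗ[F] L) (S R : Submodule F L) : Prop :=
  IsSemisimpleSubalg br S ∧ IsSolvRadical br R ∧ S ⊓ R = ⊥ ∧ S ⊔ R = ⊤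

/-- `θ` restricts to an `S`-module homomorphism from `S` into `Tgt`
(the `S`-module structure being the right action). -/
def IsModHom (br : L →ₗ[F] L →ₗ[F] L) (S Tgt : Submodule F L) (θ : L →ₗ[F] L) : Prop :=
  (∀ x ∈ S, θ x ∈ Tgt) ∧ ∀ x ∈ S, ∀ y ∈ S, θ (br x y) = br (θ x) y

/-- The Levi subalgebra `S_θ = {x + θ(x) : x ∈ S}`. -/
def Stheta (S : Submodule F L) (θ : L →ₗ[F] L) : Set L :=
  {z | ∃ x ∈ S, z = x + θ x}

/-- The exponential of a nilpotent endomorphism `D` with `D ^ n = 0`, as a finite sum. -/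
def expSum (D : Module.End F L) (n : ℕ) : Module.End F L :=
  ∑ k ∈ Finset.range n, ((k.factorial : F)⁻¹) • D ^ k

/-- Inner automorphisms: compositions of maps `exp(R_a)` with `a ∈ N`. -/
inductive IsInnerAut (br : L →ₗ[F] L →ₗ[F] L) (N : Submodule F L) : Module.End F L → Prop
  | id : IsInnerAut br N 1
  | comp (a : L) (ha : a ∈ N) (n : ℕ) (hn : (br.flip a : Module.End F L) ^ n = 0)
      (φ : Module.End F L) (hφ : IsInnerAut br N φ) :
      IsInnerAut br N (expSum (br.flip a) n * φ)

/-- The Levi subalgebra `S` is unique up to conjugation by an inner automorphism. -/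
def LeviUnique (br : L →ₗ[F] L →ₗ[F] L) (S R N : Submodule F L) : Prop :=
  ∀ S₁ : Submodule F L, IsLeviDecomp br S₁ R →
    ∃ φ : Module.End F L, IsInnerAut br N φ ∧ Submodule.map φ S = S₁

/-- `J` is the maximal `S`-submodule of `I` with `Hom_S(S, I) ≡ Hom_S(S, J)`:
the smallest `S`-submodule of `I` containing the image of every `S`-module
homomorphism from `S` into `I`. -/
def IsJmod (br : L →ₗ[F] L →ₗ[F] L) (S J : Submodule F L) : Prop :=
  J ≤ sqIdeal br ∧ (∀ j ∈ J, ∀ s ∈ S, br j s ∈ J) ∧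
  (∀ θ : L →ₗ[F] L, IsModHom br S (sqIdeal br) θ → ∀ x ∈ S, θ x ∈ J) ∧
  ∀ J' : Submodule F L,
    (J' ≤ sqIdeal br ∧ (∀ j ∈ J', ∀ s ∈ S, br j s ∈ J') ∧
      (∀ θ : L →ₗ[F] L, IsModHom br S (sqIdeal br) θ → ∀ x ∈ S, θ x ∈ J')) → J ≤ J'

/-- Membership in `E = {b ∈ N : [S, b] ⊆ I}`. -/
def memE (br : L →ₗ[F] L →ₗ[F] L) (S N : Submodule F L) (b : L) : Prop :=
  b ∈ N ∧ ∀ s ∈ S, br s b ∈ sqIdeal br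

/-- The subspace `[S, E]`, the span of all `[s, e]` with `s ∈ S`, `e ∈ E`. -/
def brSE (br : L →ₗ[F] L →ₗ[F] L) (S N : Submodule F L) : Submodule F L :=
  Submodule.span F {z | ∃ s ∈ S, ∃ e, memE br S N e ∧ z = br s e}

theorem delta_theta_derivation (F L : Type) [Field F] [CharZero F]
    [AddCommGroup L] [Module F L] [FiniteDimensional F L]
    (br : L →ₗ[F] L →ₗ[F] L)
    (leib : ∀ x y z : L, br x (br y z) = br (br x y) z - br (br x z) y)
    (S R : Submodule F L) (hLevi : IsLeviDecomp br S R)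
    (hLI : ∀ x : L, ∀ i ∈ sqIdeal br, br x i = 0)
    (θ : L →ₗ[F] L) (hθ : IsModHom br S (sqIdeal br) θ)
    (hθR : ∀ x ∈ S, ∀ r ∈ R, br (θ x) r = 0)
    (δ : L →ₗ[F] L) (hδ : ∀ x ∈ S, ∀ r ∈ R, δ (x + r) = θ x) :
    (∀ x y : L, δ (br x y) = br (δ x) y + br x (δ y)) ∧
      δ ∘ₗ δ = 0 ∧
      Function.Bijective ((LinearMap.id + δ : L →ₗ[F] L)) ∧
      (∀ x y : L, ((LinearMap.id + δ : L →ₗ[F] L)) (br x y) =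
        br (((LinearMap.id + δ : L →ₗ[F] L)) x) (((LinearMap.id + δ : L →ₗ[F] L)) y)) ∧
      (fun x => x + δ x) '' (S : Set L) = Stheta S θ := by
  obtain ⟨⟨⟨hSclosed, _⟩, _⟩, ⟨hRideal, _, hRmax⟩, _, hSR⟩ := hLevi
  have hsq : ∀ x : L, br x x ∈ sqIdeal br := fun x => Submodule.subset_span ⟨x, rfl⟩
  have hsum : ∀ x y : L, br x y + br y x ∈ sqIdeal br := by
    intro x y
    have h : br x y + br y x = br (x + y) (x + y) - br x x - br y y := by
      simp only [map_add, LinearMap.add_apply]; abel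
    rw [h]
    exact Submodule.sub_mem _ (Submodule.sub_mem _ (hsq _) (hsq _)) (hsq _)
  have hIideal : IsIdeal br (sqIdeal br) := by
    intro x hx y
    constructor
    · have h1 := hsum x y
      rw [hLI y x hx, add_zero] at h1
      exact h1
    · rw [hLI y x hx]; exact Submodule.zero_mem _
  have hIsolv : IsSolvableSub br (sqIdeal br) := by
    refine ⟨1, ?_⟩
    show brSpan br (sqIdeal br) (sqIdeal br) = ⊥
    rw [eq_bot_iff, brSpan]
    refine Submodule.span_le.mpr ?_
    rintro z ⟨a, ha, b, hb, rfl⟩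
    simp [hLI a b hb]
  have hIR : sqIdeal br ≤ R := hRmax _ hIideal hIsolv
  have hdec : ∀ x : L, ∃ s ∈ S, ∃ r ∈ R, x = s + r := by
    intro x
    have hx : x ∈ S ⊔ R := by rw [hSR]; trivial
    obtain ⟨s, hs, r, hr, h⟩ := Submodule.mem_sup.mp hx
    exact ⟨s, hs, r, hr, h.symm⟩
  have hδS : ∀ x ∈ S, δ x = θ x := by
    intro x hx
    have := hδ x hx 0 R.zero_mem
    simpa using this
  have hδR : ∀ r ∈ R, δ r = 0 := by
    intro r hr
    have := hδ 0 S.zero_mem r hr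
    simpa using this
  have hδI : ∀ x : L, δ x ∈ sqIdeal br := by
    intro x
    obtain ⟨s, hs, r, hr, rfl⟩ := hdec x
    rw [hδ s hs r hr]
    exact hθ.1 s hs
  have hδδ : ∀ x : L, δ (δ x) = 0 := fun x => hδR _ (hIR (hδI x))
  have hder : ∀ x y : L, δ (br x y) = br (δ x) y + br x (δ y) := by
    intro x y
    obtain ⟨s, hs, r, hr, rfl⟩ := hdec x
    obtain ⟨s', hs', r', hr', rfl⟩ := hdec y
    have hw : br s r' + (br r s' + br r r') ∈ R :=
      R.add_mem ((hRideal r' hr' s).2) (R.add_mem ((hRideal r hr s').1) ((hRideal r hr r').1))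
    have hexp : br (s + r) (s' + r') = br s s' + (br s r' + (br r s' + br r r')) := by
      simp only [map_add, LinearMap.add_apply]; abel
    rw [hexp, hδ (br s s') (hSclosed s hs s' hs') _ hw, hθ.2 s hs s' hs',
        hδ s hs r hr, hδ s' hs' r' hr']
    have h1 : br (s + r) (θ s') = 0 := hLI _ _ (hθ.1 s' hs')
    have h2 : br (θ s) (s' + r') = br (θ s) s' := by
      simp only [map_add, hθR s hs r' hr', add_zero]
    rw [h1, h2, add_zero]
  refine ⟨hder, ?_, ?_, ?_, ?_⟩
  · ext x; simp [hδδ x]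
  · refine Function.bijective_iff_has_inverse.mpr ⟨fun x => x - δ x, ?_, ?_⟩
    · intro x
      simp only [LinearMap.add_apply, LinearMap.id_apply, map_add, hδδ x]
      abel
    · intro x
      simp only [LinearMap.add_apply, LinearMap.id_apply, map_sub, hδδ x]
      abel
  · intro x y
    simp only [LinearMap.add_apply, LinearMap.id_apply, map_add, hder x y]
    rw [hLI (δ x) (δ y) (hδI y)]
    abel
  · ext z
    constructor
    · rintro ⟨x, hx, rfl⟩
      exact ⟨x, hx, by show x + δ x = x + θ x; rw [hδS x hx]⟩
    · rintro ⟨x, hx, rfl⟩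
      exact ⟨x, hx, by show (fun x => x + δ x) x = x + θ x; simp only []; rw [hδS x hx]⟩
end

section
/- Let L = S ∔ R be a Levi decomposition of a Leibniz algebra with [S, R] = 0 and [J, R] ≠ 0, where J is the maximal S-submodule of I such that Hom_S(S, I) ≡ Hom_S(S, J). Then there exists a Levi subalgebra S₁ of L such that no automorphism of L maps S onto S₁. -/
open Finset

variable {F L : Type} [Field F] [AddCommGroup L] [Module F L]

/-!
Squares `[x, x]` are right annihilators of a Leibniz algebra, so for an `S`-module map
`θ : S → I` the map `x ↦ x + θ x` is a bracket isomorphism of `S` onto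
`S_θ = {x + θ x : x ∈ S}`, and `S_θ` is again a Levi complement of `R`.
Any automorphism preserves `R`, so it carries `S`, which annihilates `R` on the left, to a
subalgebra with the same property. Minimality of `J` forces some `θ` to have
`[θ x₀, r₀] ≠ 0`, and then `[x₀ + θ x₀, r₀] = [θ x₀, r₀] ≠ 0` shows that `S_θ` is not
an image of `S`.
-/

def IsLeibniz (br : L →ₗ[F] L →ₗ[F] L) : Prop :=
  ∀ x y z : L, br x (br y z) = br (br x y) z - br (br x z) y

section Leibniz

variable {br : L →ₗ[F] L →ₗ[F] L}

theorem sq_mem_sqIdeal (br : L →ₗ[F] L →ₗ[F] L) (x : L) : br x x ∈ sqIdeal br :=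
  Submodule.subset_span ⟨x, rfl⟩

theorem br_add_br_swap_mem_sqIdeal (br : L →ₗ[F] L →ₗ[F] L) (a b : L) :
    br a b + br b a ∈ sqIdeal br := by
  have h : br a b + br b a = br (a + b) (a + b) - br a a - br b b := by
    simp only [map_add, LinearMap.add_apply]
    abel
  rw [h]
  exact sub_mem (sub_mem (sq_mem_sqIdeal br _) (sq_mem_sqIdeal br _)) (sq_mem_sqIdeal br _)

theorem IsLeibniz.br_eq_zero_of_mem_sqIdeal (leib : IsLeibniz br) {i : L}
    (hi : i ∈ sqIdeal br) (y : L) : br y i = 0 := by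
  have h : sqIdeal br ≤ LinearMap.ker (br y) := by
    rw [sqIdeal, Submodule.span_le]
    rintro _ ⟨x, rfl⟩
    simp [leib y x x]
  exact h hi

theorem IsLeibniz.isIdeal_sqIdeal (leib : IsLeibniz br) : IsIdeal br (sqIdeal br) := by
  intro i hi y
  have hyi : br y i = 0 := leib.br_eq_zero_of_mem_sqIdeal hi y
  refine ⟨?_, hyi ▸ zero_mem _⟩
  simpa [hyi] using br_add_br_swap_mem_sqIdeal br i y

theorem IsLeibniz.isSolvableSub_sqIdeal (leib : IsLeibniz br) :
    IsSolvableSub br (sqIdeal br) := by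
  refine ⟨1, eq_bot_iff.mpr ?_⟩
  show brSpan br (sqIdeal br) (sqIdeal br) ≤ ⊥
  rw [brSpan, Submodule.span_le]
  rintro _ ⟨a, -, b, hb, rfl⟩
  exact leib.br_eq_zero_of_mem_sqIdeal hb a

theorem IsLeibniz.sqIdeal_le_of_isSolvRadical (leib : IsLeibniz br) {R : Submodule F L}
    (hR : IsSolvRadical br R) : sqIdeal br ≤ R :=
  hR.2.2 _ leib.isIdeal_sqIdeal leib.isSolvableSub_sqIdeal

end Leibniz

section DerivedSeries

variable (br : L →ₗ[F] L →ₗ[F] L)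

theorem brSpan_mono {A A' B B' : Submodule F L} (hA : A ≤ A') (hB : B ≤ B') :
    brSpan br A B ≤ brSpan br A' B' := by
  rw [brSpan, Submodule.span_le]
  rintro _ ⟨a, ha, b, hb, rfl⟩
  exact Submodule.subset_span ⟨a, hA ha, b, hB hb, rfl⟩

theorem brSpan_map_le (f : L →ₗ[F] L) {A B : Submodule F L}
    (hf : ∀ a ∈ A, ∀ b ∈ B, f (br a b) = br (f a) (f b)) :
    brSpan br (A.map f) (B.map f) ≤ (brSpan br A B).map f := by
  rw [brSpan, Submodule.span_le]
  rintro _ ⟨_, ⟨a, ha, rfl⟩, _, ⟨b, hb, rfl⟩, rfl⟩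
  exact ⟨br a b, Submodule.subset_span ⟨a, ha, b, hb, rfl⟩, hf a ha b hb⟩

variable {br}

theorem derSer_le {K C : Submodule F L} (hKC : K ≤ C)
    (hC : ∀ a ∈ C, ∀ b ∈ C, br a b ∈ C) (n : ℕ) : derSer br K n ≤ C := by
  induction n with
  | zero => exact hKC
  | succ n ih =>
    show brSpan br (derSer br K n) (derSer br K n) ≤ C
    rw [brSpan, Submodule.span_le]
    rintro _ ⟨a, ha, b, hb, rfl⟩
    exact hC a (ih ha) b (ih hb)

theorem derSer_map_le (f : L →ₗ[F] L) {K C : Submodule F L} (hKC : K ≤ C)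
    (hC : ∀ a ∈ C, ∀ b ∈ C, br a b ∈ C)
    (hf : ∀ a ∈ C, ∀ b ∈ C, f (br a b) = br (f a) (f b)) (n : ℕ) :
    derSer br (K.map f) n ≤ (derSer br K n).map f := by
  induction n with
  | zero => exact le_rfl
  | succ n ih =>
    have hn := derSer_le hKC hC n
    exact (brSpan_mono br ih ih).trans
      (brSpan_map_le br f fun a ha b hb => hf a (hn ha) b (hn hb))

theorem IsSolvableSub.map {K C : Submodule F L} (hK : IsSolvableSub br K) (f : L →ₗ[F] L)
    (hKC : K ≤ C) (hC : ∀ a ∈ C, ∀ b ∈ C, br a b ∈ C)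
    (hf : ∀ a ∈ C, ∀ b ∈ C, f (br a b) = br (f a) (f b)) :
    IsSolvableSub br (K.map f) := by
  obtain ⟨n, hn⟩ := hK
  refine ⟨n, le_bot_iff.mp ?_⟩
  simpa [hn] using derSer_map_le f hKC hC hf n

end DerivedSeries

section Radical

variable {br : L →ₗ[F] L →ₗ[F] L} {R : Submodule F L}

theorem IsSolvRadical.map_le (hR : IsSolvRadical br R) (φ : L ≃ₗ[F] L)
    (hφ : ∀ x y : L, φ (br x y) = br (φ x) (φ y)) : R.map (φ : L →ₗ[F] L) ≤ R := by
  refine hR.2.2 _ ?_ <|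
    hR.2.1.map _ le_top (fun _ _ _ _ => trivial) fun a _ b _ => hφ a b
  rintro _ ⟨r, hr, rfl⟩ y
  obtain ⟨x, rfl⟩ := φ.surjective y
  exact ⟨⟨br r x, (hR.1 r hr x).1, hφ r x⟩, ⟨br x r, (hR.1 r hr x).2, hφ x r⟩⟩

theorem IsSolvRadical.map_eq (hR : IsSolvRadical br R) (φ : L ≃ₗ[F] L)
    (hφ : ∀ x y : L, φ (br x y) = br (φ x) (φ y)) : R.map (φ : L →ₗ[F] L) = R := by
  have hφsymm : ∀ x y : L, φ.symm (br x y) = br (φ.symm x) (φ.symm y) := fun x y =>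
    φ.injective (by simp [hφ])
  refine le_antisymm (hR.map_le φ hφ) fun r hr => ⟨φ.symm r, ?_, by simp⟩
  exact hR.map_le φ.symm hφsymm ⟨r, hr, rfl⟩

theorem IsSolvRadical.br_map_eq_zero (hR : IsSolvRadical br R) {S : Submodule F L}
    (hSR : ∀ s ∈ S, ∀ r ∈ R, br s r = 0) (φ : L ≃ₗ[F] L)
    (hφ : ∀ x y : L, φ (br x y) = br (φ x) (φ y)) :
    ∀ t ∈ S.map (φ : L →ₗ[F] L), ∀ r ∈ R, br t r = 0 := by
  rintro _ ⟨s, hs, rfl⟩ r hr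
  obtain ⟨r', hr', rfl⟩ : r ∈ R.map (φ : L →ₗ[F] L) := (hR.map_eq φ hφ).symm ▸ hr
  simp [← hφ, hSR s hs r' hr']

end Radical

section Semisimple

variable {br : L →ₗ[F] L →ₗ[F] L} {S : Submodule F L} {ψ : L →ₗ[F] L}

theorem IsLieSubalg.map (hS : IsLieSubalg br S)
    (hψ : ∀ x ∈ S, ∀ y ∈ S, ψ (br x y) = br (ψ x) (ψ y)) :
    IsLieSubalg br (S.map ψ) := by
  constructor
  · rintro _ ⟨x, hx, rfl⟩ _ ⟨y, hy, rfl⟩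
    exact ⟨br x y, hS.1 x hx y hy, hψ x hx y hy⟩
  · rintro _ ⟨x, hx, rfl⟩ _ ⟨y, hy, rfl⟩
    simp only [← hψ x hx y hy, ← hψ y hy x hx, hS.2 x hx y hy, map_neg]

/-- The left inverse `p` serves to pull solvable ideals of `ψ(S)` back to `S`. -/
theorem IsSemisimpleSubalg.map (hS : IsSemisimpleSubalg br S)
    (hψ : ∀ x ∈ S, ∀ y ∈ S, ψ (br x y) = br (ψ x) (ψ y))
    {p : L →ₗ[F] L} (hp : ∀ x ∈ S, p (ψ x) = x) : IsSemisimpleSubalg br (S.map ψ) := by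
  have hT := hS.1.map hψ
  have hpbr : ∀ a ∈ S.map ψ, ∀ b ∈ S.map ψ, p (br a b) = br (p a) (p b) := by
    rintro _ ⟨x, hx, rfl⟩ _ ⟨y, hy, rfl⟩
    rw [← hψ x hx y hy, hp _ (hS.1.1 x hx y hy), hp x hx, hp y hy]
  refine ⟨hT, fun K hK hKsolv => ?_⟩
  have hpK : IsIdealIn br S (K.map p) := by
    refine ⟨?_, ?_⟩
    · rintro _ ⟨k, hk, rfl⟩
      obtain ⟨x, hx, rfl⟩ := hK.1 hk
      exact (hp x hx).symm ▸ hx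
    · rintro _ ⟨k, hk, rfl⟩ y hy
      have hψy : ψ y ∈ S.map ψ := ⟨y, hy, rfl⟩
      refine ⟨⟨_, (hK.2 k hk _ hψy).1, ?_⟩, ⟨_, (hK.2 k hk _ hψy).2, ?_⟩⟩
      · rw [hpbr _ (hK.1 hk) _ hψy, hp y hy]
      · rw [hpbr _ hψy _ (hK.1 hk), hp y hy]
  have hpK_bot : K.map p = ⊥ :=
    hS.2 _ hpK (hKsolv.map p hK.1 hT.1 hpbr)
  refine eq_bot_iff.mpr fun k hk => ?_
  obtain ⟨x, hx, rfl⟩ := hK.1 hk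
  have hx0 : x ∈ K.map p := hp x hx ▸ ⟨ψ x, hk, rfl⟩
  rw [hpK_bot, Submodule.mem_bot] at hx0
  simp [hx0]

end Semisimple

theorem isCompl_map_id_add {S R : Submodule F L} (hSR : IsCompl S R) {θ : L →ₗ[F] L}
    (hθ : ∀ x ∈ S, θ x ∈ R) : IsCompl (S.map (LinearMap.id + θ)) R := by
  constructor
  · rw [Submodule.disjoint_def]
    rintro _ ⟨x, hx, rfl⟩ hxR
    have hxR' : x ∈ R := by
      simpa using R.sub_mem hxR (hθ x hx)
    simp [Submodule.disjoint_def.mp hSR.disjoint x hx hxR']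
  · rw [codisjoint_iff, eq_top_iff]
    intro z _
    obtain ⟨s, hs, r, hr, rfl⟩ :=
      Submodule.mem_sup.mp (hSR.sup_eq_top ▸ Submodule.mem_top : z ∈ S ⊔ R)
    have hsplit : s + r = (s + θ s) + (r - θ s) := by abel
    rw [hsplit]
    exact Submodule.add_mem_sup ⟨s, hs, rfl⟩ (R.sub_mem hr (hθ s hs))

section LeviDeformation

variable {br : L →ₗ[F] L →ₗ[F] L} {S R : Submodule F L} {θ : L →ₗ[F] L}

theorem IsLeibniz.map_id_add_br (leib : IsLeibniz br) (hθ : IsModHom br S (sqIdeal br) θ) :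
    ∀ x ∈ S, ∀ y ∈ S, br x y + θ (br x y) = br (x + θ x) (y + θ y) := by
  intro x hx y hy
  have hθy := leib.br_eq_zero_of_mem_sqIdeal (hθ.1 y hy)
  simp [hθy, hθ.2 x hx y hy]

theorem IsLeibniz.isLeviDecomp_map_id_add (leib : IsLeibniz br)
    (hLevi : IsLeviDecomp br S R) (hθ : IsModHom br S (sqIdeal br) θ) :
    IsLeviDecomp br (S.map (LinearMap.id + θ)) R := by
  obtain ⟨hS, hR, hinf, hsup⟩ := hLevi
  have hθR : ∀ x ∈ S, θ x ∈ R := fun x hx =>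
    leib.sqIdeal_le_of_isSolvRadical hR (hθ.1 x hx)
  have hcompl : IsCompl S R := ⟨disjoint_iff.mpr hinf, codisjoint_iff.mpr hsup⟩
  have hp : ∀ x ∈ S, S.projection R hcompl (x + θ x) = x := fun x hx => by
    simp [Submodule.projection_apply_of_mem_left hcompl hx,
      Submodule.projection_apply_of_mem_right hcompl (hθR x hx)]
  have hcompl' := isCompl_map_id_add hcompl hθR
  exact ⟨hS.map (leib.map_id_add_br hθ) hp, hR, hcompl'.inf_eq_bot, hcompl'.sup_eq_top⟩

end LeviDeformation

/-- If every `θ` had `[θ S, R] = 0`, then `{v ∈ J : [v, R] = 0}` would satisfy the defining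
properties of `J`, so by minimality it would be all of `J`. -/
theorem IsJmod.exists_isModHom_br_ne_zero {br : L →ₗ[F] L →ₗ[F] L} {S R J : Submodule F L}
    (hJ : IsJmod br S J) (leib : IsLeibniz br) (hSR : ∀ s ∈ S, ∀ r ∈ R, br s r = 0)
    (hJR : ∃ j ∈ J, ∃ r ∈ R, br j r ≠ 0) :
    ∃ θ : L →ₗ[F] L, IsModHom br S (sqIdeal br) θ ∧
      ∃ x ∈ S, ∃ r ∈ R, br (θ x) r ≠ 0 := by
  by_contra! hcon
  obtain ⟨j, hj, r, hr, hjr⟩ := hJR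
  let V : Submodule F L := J ⊓ ⨅ r ∈ R, LinearMap.ker (br.flip r)
  have hmemV : ∀ v, v ∈ V ↔ v ∈ J ∧ ∀ r ∈ R, br v r = 0 := fun v => by
    simp [V]
  have hJV : J ≤ V := by
    refine hJ.2.2.2 V ⟨fun v hv => hJ.1 ((hmemV v).mp hv).1, ?_, ?_⟩
    · intro v hv s hs
      obtain ⟨hvJ, hvR⟩ := (hmemV v).mp hv
      refine (hmemV _).mpr ⟨hJ.2.1 v hvJ s hs, fun r hr => ?_⟩
      have h := leib v s r
      rw [hSR s hs r hr, hvR r hr, map_zero, map_zero, LinearMap.zero_apply] at h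
      exact sub_eq_zero.mp h.symm
    · exact fun θ hθ x hx => (hmemV _).mpr ⟨hJ.2.2.1 θ hθ x hx, hcon θ hθ x hx⟩
  exact hjr (((hmemV j).mp (hJV hj)).2 r hr)

theorem exists_nonconjugate_levi_general (F L : Type) [Field F]
    [AddCommGroup L] [Module F L]
    (br : L →ₗ[F] L →ₗ[F] L)
    (leib : ∀ x y z : L, br x (br y z) = br (br x y) z - br (br x z) y)
    (S R J : Submodule F L)
    (hLevi : IsLeviDecomp br S R) (hJ : IsJmod br S J)
    (hSR : ∀ s ∈ S, ∀ r ∈ R, br s r = 0)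
    (hJR : ∃ j ∈ J, ∃ r ∈ R, br j r ≠ 0) :
    ∃ S₁ : Submodule F L, IsLeviDecomp br S₁ R ∧
      ∀ φ : L ≃ₗ[F] L, (∀ x y : L, φ (br x y) = br (φ x) (φ y)) →
        Submodule.map (φ : L →ₗ[F] L) S ≠ S₁ := by
  have leib : IsLeibniz br := leib
  obtain ⟨θ, hθ, x₀, hx₀, r₀, hr₀, hne⟩ := hJ.exists_isModHom_br_ne_zero leib hSR hJR
  refine ⟨S.map (LinearMap.id + θ), leib.isLeviDecomp_map_id_add hLevi hθ, ?_⟩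
  intro φ hφ hmap
  have hmem : x₀ + θ x₀ ∈ S.map (φ : L →ₗ[F] L) :=
    hmap ▸ Submodule.mem_map_of_mem hx₀
  have hzero := hLevi.2.1.br_map_eq_zero hSR φ hφ _ hmem r₀ hr₀
  exact hne (by simpa [hSR x₀ hx₀ r₀ hr₀] using hzero)

theorem exists_nonconjugate_levi (F L : Type) [Field F] [CharZero F]
    [AddCommGroup L] [Module F L] [FiniteDimensional F L]
    (br : L →ₗ[F] L →ₗ[F] L)
    (leib : ∀ x y z : L, br x (br y z) = br (br x y) z - br (br x z) y)
    (S R J : Submodule F L)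
    (hLevi : IsLeviDecomp br S R) (hJ : IsJmod br S J)
    (hSR : ∀ s ∈ S, ∀ r ∈ R, br s r = 0)
    (hJR : ∃ j ∈ J, ∃ r ∈ R, br j r ≠ 0) :
    ∃ S₁ : Submodule F L, IsLeviDecomp br S₁ R ∧
      ∀ φ : L ≃ₗ[F] L, (∀ x y : L, φ (br x y) = br (φ x) (φ y)) →
        Submodule.map (φ : L →ₗ[F] L) S ≠ S₁ :=
  exists_nonconjugate_levi_general F L br leib S R J hLevi hJ hSR hJR
end
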